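/- Let G be a topological group. Then there exists a subgroup H ⊆ G such that H, equipped with the subspace topology, is extremely amenable, and H is maximal among extremely amenable subgroups: for every subgroup H' of G with H ⊆ H' such that H' is extremely amenable in the subspace topology, one has H' = H. -/

import Mathlib

/-- A topological group `G` is *extremely amenable* if every continuous action of `G`
on a nonempty compact Hausdorff space has a `G`-fixed point. -/
def ExtremelyAmenable (G : Type) [Group G] [TopologicalSpace G] : Prop :=
  ∀ (X : Type) [TopologicalSpace X] [CompactSpace X] [T2Space X] [Nonempty X]
    [MulAction G X] [ContinuousSMul G X], ∃ x : X, ∀ g : G, g • x = x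

/-- The pair `(G, H)` is *relatively extremely amenable* if every continuous action of `G`
on a nonempty compact Hausdorff space has a point fixed by every element of `H`. -/
def RelativelyExtremelyAmenable (G : Type) [Group G] [TopologicalSpace G] (H : Subgroup G) :
    Prop :=
  ∀ (X : Type) [TopologicalSpace X] [CompactSpace X] [T2Space X] [Nonempty X]
    [MulAction G X] [ContinuousSMul G X], ∃ x : X, ∀ h ∈ H, h • x = x

/-!
Extremely amenable subgroups are ordered by inclusion and `⊥` is one of them, so by Zorn's lemma
it suffices that the supremum of a chain of them is again extremely amenable. Given a continuous
action of that supremum on a nonempty compact Hausdorff space, each member of the chain has a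
nonempty closed set of fixed points; these sets form a directed family, so by compactness they
have a common point, and that point is fixed by the union of the chain, which is its supremum.
-/

open Set

lemma extremelyAmenable_bot (G : Type) [Group G] [TopologicalSpace G] :
    ExtremelyAmenable ↥(⊥ : Subgroup G) := by
  intro X _ _ _ _ _ _
  obtain ⟨x⟩ := ‹Nonempty X›
  refine ⟨x, fun g => ?_⟩
  rw [show g = 1 from Subtype.ext (Subgroup.mem_bot.mp g.2), one_smul]

lemma isClosed_setOf_forall_smul_eq {K X : Type*} [SMul K X] [TopologicalSpace X] [T2Space X]
    [ContinuousConstSMul K X] (S : Set K) : IsClosed {x : X | ∀ g ∈ S, g • x = x} := by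
  simp only [ofPred_forall]
  exact isClosed_biInter fun g _ => isClosed_eq (continuous_const_smul g) continuous_id

theorem ExtremelyAmenable.exists_forall_map_smul_eq {H : Type} {K : Type*} [Group H]
    [TopologicalSpace H] [Monoid K] [TopologicalSpace K] (hH : ExtremelyAmenable H) {f : H →* K}
    (hf : Continuous f)
    (X : Type) [TopologicalSpace X] [CompactSpace X] [T2Space X] [Nonempty X] [MulAction K X]
    [ContinuousSMul K X] : ∃ x : X, ∀ h : H, f h • x = x :=
  letI : MulAction H X := MulAction.compHom X f
  have : ContinuousSMul H X := MulAction.continuousSMul_compHom hf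
  hH X

theorem extremelyAmenable_sSup_of_directedOn {G : Type} [Group G] [TopologicalSpace G]
    {c : Set (Subgroup G)} (hne : c.Nonempty) (hdir : DirectedOn (· ≤ ·) c)
    (hc : ∀ H ∈ c, ExtremelyAmenable H) : ExtremelyAmenable ↥(sSup c) := by
  intro X _ _ _ _ _ _
  have : Nonempty c := hne.to_subtype
  let fixedBy : c → Set X := fun H =>
    {x | ∀ g ∈ ((H : Subgroup G).subgroupOf (sSup c) : Set ↥(sSup c)), g • x = x}
  have fixedBy_closed (H : c) : IsClosed (fixedBy H) := isClosed_setOf_forall_smul_eq _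
  have fixedBy_nonempty (H : c) : (fixedBy H).Nonempty := by
    have hle : (H : Subgroup G) ≤ sSup c := le_sSup H.2
    obtain ⟨x, hx⟩ := (hc H H.2).exists_forall_map_smul_eq
      (f := Subgroup.inclusion hle) (continuous_subtype_val.subtype_mk _) X
    exact ⟨x, fun g hg => hx ⟨g, hg⟩⟩
  have fixedBy_directed : Directed (· ⊇ ·) fixedBy := by
    rintro ⟨H₁, h₁⟩ ⟨H₂, h₂⟩
    obtain ⟨H₃, h₃, le₁, le₂⟩ := hdir H₁ h₁ H₂ h₂
    exact ⟨⟨H₃, h₃⟩, fun x hx g hg => hx g (le₁ hg), fun x hx g hg => hx g (le₂ hg)⟩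
  obtain ⟨x, hx⟩ := IsCompact.nonempty_iInter_of_directed_nonempty_isCompact_isClosed
    fixedBy fixedBy_directed fixedBy_nonempty (fun H => (fixedBy_closed H).isCompact) fixedBy_closed
  refine ⟨x, fun g => ?_⟩
  obtain ⟨H, hHc, hgH⟩ := (Subgroup.mem_sSup_of_directedOn hne hdir).mp g.2
  exact mem_iInter.mp hx ⟨H, hHc⟩ g hgH

theorem exists_maximally_extremelyAmenable_subgroup_general
    (G : Type) [Group G] [TopologicalSpace G] :
    ∃ H : Subgroup G, ExtremelyAmenable ↥H ∧
      ∀ H' : Subgroup G, H ≤ H' → ExtremelyAmenable ↥H' → H' = H := by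
  obtain ⟨H, -, hmax⟩ := zorn_le_nonempty₀ {H : Subgroup G | ExtremelyAmenable ↥H}
    (fun c hc hchain K hK => ⟨sSup c,
      extremelyAmenable_sSup_of_directedOn ⟨K, hK⟩ hchain.directedOn hc, fun _ => le_sSup⟩)
    ⊥ (extremelyAmenable_bot G)
  exact ⟨H, hmax.prop, fun H' hle hH' => hmax.eq_of_ge hH' hle⟩

/-- Every topological group `G` admits a subgroup `H` that is extremely amenable in the
subspace topology and maximal among such subgroups. -/
theorem exists_maximally_extremelyAmenable_subgroup
    (G : Type) [Group G] [TopologicalSpace G] [IsTopologicalGroup G] :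
    ∃ H : Subgroup G, ExtremelyAmenable ↥H ∧
      ∀ H' : Subgroup G, H ≤ H' → ExtremelyAmenable ↥H' → H' = H :=
  exists_maximally_extremelyAmenable_subgroup_general G
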